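/- arXiv:1409.2063 — 3 statements merged into one kernel-verified Lean document; each statement's English description precedes it below -/
import Mathlib

section
/- Let F : ℝ → ℝ be a degree-one lift and suppose the induced circle homeomorphism is conjugate to its inverse by an orientation-preserving circle homeomorphism; concretely, suppose there exist a degree-one lift H and an integer m such that H(F(x)) = F⁻¹(H(x)) + m for all x ∈ ℝ. Then twice the rotation number of F is an integer: 2·ρ(F) ∈ ℤ (so the rotation number of the induced circle map is 0 or 1/2 modulo 1). -/
/-!
If `h` conjugates `f` to `T_m ∘ f⁻¹`, where `T_m` is translation by an integer `m`, then, since the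
translation number is a conjugacy invariant, additive on commuting lifts and odd under inversion,
`τ f = τ (T_m * f⁻¹) = m - τ f`.
-/

open Function

namespace CircleDeg1Lift

theorem commute_translate_int (f : CircleDeg1Lift) (m : ℤ) :
    Commute (translate (Multiplicative.ofAdd (m : ℝ)) : CircleDeg1Lift) f :=
  ext fun x => (f.map_int_add m x).symm

theorem translationNumber_translate_int_mul (f : CircleDeg1Lift) (m : ℤ) :
    translationNumber (translate (Multiplicative.ofAdd (m : ℝ)) * f) =
      m + translationNumber f := by
  rw [translationNumber_mul_of_commute (f.commute_translate_int m), translationNumber_translate]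

theorem two_mul_translationNumber_eq_of_semiconjBy_inv {f : CircleDeg1Liftˣ} {h : CircleDeg1Lift}
    {m : ℤ} (hconj : SemiconjBy h f (translate (Multiplicative.ofAdd (m : ℝ)) * ↑f⁻¹)) :
    2 * translationNumber f = m := by
  have := translationNumber_eq_of_semiconjBy hconj
  rw [translationNumber_translate_int_mul, translationNumber_units_inv] at this
  linarith

theorem coe_units_inv_eq_of_rightInverse (f : CircleDeg1Liftˣ) {g : ℝ → ℝ}
    (hg : RightInverse g f) : ⇑(f⁻¹ : CircleDeg1Liftˣ) = g :=
  funext fun x => by rw [← hg x, units_inv_apply_apply, hg x]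

end CircleDeg1Lift

open CircleDeg1Lift in
theorem stmt_2_general (F : ℝ → ℝ) (hFmono : StrictMono F)
    (hFper : ∀ x : ℝ, F (x + 1) = F x + 1)
    (Finv : ℝ → ℝ)
    (hFinv₂ : Function.RightInverse Finv F)
    (H : ℝ → ℝ) (hHmono : StrictMono H)
    (hHper : ∀ x : ℝ, H (x + 1) = H x + 1)
    (m : ℤ) (hconj : ∀ x : ℝ, H (F x) = Finv (H x) + m) :
    ∃ k : ℤ,
      2 * CircleDeg1Lift.translationNumber ⟨⟨F, hFmono.monotone⟩, hFper⟩ = (k : ℝ) := by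
  have hf : IsUnit (⟨⟨F, hFmono.monotone⟩, hFper⟩ : CircleDeg1Lift) :=
    isUnit_iff_bijective.2 ⟨hFmono.injective, hFinv₂.surjective⟩
  have hinv : ⇑(hf.unit⁻¹ : CircleDeg1Liftˣ) = Finv :=
    coe_units_inv_eq_of_rightInverse hf.unit hFinv₂
  have hsemiconj : SemiconjBy (⟨⟨H, hHmono.monotone⟩, hHper⟩ : CircleDeg1Lift) hf.unit
      (translate (Multiplicative.ofAdd (m : ℝ)) * ↑hf.unit⁻¹) := by
    refine ext fun x => ?_
    simp only [mul_apply, translate_apply, hinv]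
    rw [hf.unit_spec]
    exact (hconj x).trans (add_comm _ _)
  have htwice := two_mul_translationNumber_eq_of_semiconjBy_inv hsemiconj
  rw [hf.unit_spec] at htwice
  exact ⟨m, htwice⟩

/-- If a degree-one lift `F` induces a circle homeomorphism that is conjugate to
its inverse by an orientation-preserving circle homeomorphism (witnessed on lifts by a
degree-one lift `H` and an integer `m` with `H (F x) = F⁻¹ (H x) + m`), then twice the rotation
(translation) number of `F` is an integer. -/
theorem stmt_2 (F : ℝ → ℝ) (hFmono : StrictMono F) (hFcont : Continuous F)
    (hFper : ∀ x : ℝ, F (x + 1) = F x + 1)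
    (Finv : ℝ → ℝ) (hFinv₁ : Function.LeftInverse Finv F)
    (hFinv₂ : Function.RightInverse Finv F)
    (H : ℝ → ℝ) (hHmono : StrictMono H) (hHcont : Continuous H)
    (hHper : ∀ x : ℝ, H (x + 1) = H x + 1)
    (m : ℤ) (hconj : ∀ x : ℝ, H (F x) = Finv (H x) + m) :
    ∃ k : ℤ,
      2 * CircleDeg1Lift.translationNumber ⟨⟨F, hFmono.monotone⟩, hFper⟩ = (k : ℝ) :=
  stmt_2_general F hFmono hFper Finv hFinv₂ H hHmono hHper m hconj
end

section
/- Let F : ℝ → ℝ be a degree-one lift inducing the orientation-preserving circle homeomorphism f of ℝ/ℤ, and suppose the fixed point set {z ∈ ℝ/ℤ : f(z) = z} is nonempty and finite. Then every finite Borel measure μ on ℝ/ℤ that is f-invariant (the pushforward of μ under f equals μ) and absolutely continuous with respect to Haar (Lebesgue) measure on ℝ/ℤ is the zero measure. -/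
/-!
Cut the circle at a fixed point `α` of `f` and normalise the lift so that `G α = α`; then `G`
preserves `(α, α + 1]`, and the coordinate of `ℝ/ℤ` in `(α, α + 1]` conjugates `f` to `G`, so `μ`
becomes a finite `G`-invariant measure `ν` on `ℝ`. Since `G` is increasing, `G⁻¹' Iic (G s) = Iic s`,
so `ν (Iic (G s)) = ν (Iic s)` and the interval between `s` and `G s` is `ν`-null. Every point that
`G` moves lies inside such an interval, so `ν` lives on the fixed points of `G`. These project to
fixed points of `f`, a finite set, which `μ` does not charge because it has no atoms.
-/

open MeasureTheory Set Filter Topology Function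
open scoped Interval

theorem Continuous.exists_mem_Ioo_min_max_of_apply_ne {G : ℝ → ℝ} (hG : Continuous G) {y : ℝ}
    (hy : G y ≠ y) : ∃ z, y ∈ Ioo (min z (G z)) (max z (G z)) := by
  rcases hy.lt_or_gt with hlt | hgt
  · obtain ⟨z, hGz, hyz⟩ : ∃ z, G z < y ∧ y < z :=
      (((hG.tendsto y).eventually_lt_const hlt).filter_mono nhdsWithin_le_nhds |>.and
        self_mem_nhdsWithin).exists (f := 𝓝[>] y)
    refine ⟨z, ?_⟩
    rw [min_eq_right (hGz.trans hyz).le, max_eq_left (hGz.trans hyz).le]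
    exact ⟨hGz, hyz⟩
  · obtain ⟨z, hyGz, hzy⟩ : ∃ z, y < G z ∧ z < y :=
      (((hG.tendsto y).eventually_const_lt hgt).filter_mono nhdsWithin_le_nhds |>.and
        self_mem_nhdsWithin).exists (f := 𝓝[<] y)
    refine ⟨z, ?_⟩
    rw [min_eq_left (hzy.trans hyGz).le, max_eq_right (hzy.trans hyGz).le]
    exact ⟨hzy, hyGz⟩

namespace StrictMono

variable {G : ℝ → ℝ} {ν : Measure ℝ}

theorem measure_Iic_eq (hG : StrictMono G) (hν : MeasurePreserving G ν ν) (s : ℝ) :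
    ν (Iic (G s)) = ν (Iic s) := by
  rw [← hν.measure_preimage measurableSet_Iic.nullMeasurableSet]
  congr 1
  ext x
  exact hG.le_iff_le

theorem measure_uIoc_eq_zero [IsFiniteMeasure ν] (hG : StrictMono G)
    (hν : MeasurePreserving G ν ν) (s : ℝ) : ν (Ι s (G s)) = 0 := by
  have hIoc {a b : ℝ} (hab : a ≤ b) (h : ν (Iic b) = ν (Iic a)) : ν (Ioc a b) = 0 := by
    rw [← Iic_sdiff_Iic, measure_sdiff (Iic_subset_Iic.2 hab) measurableSet_Iic.nullMeasurableSet
      (measure_ne_top _ _), h, tsub_self]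
  rcases le_total s (G s) with h | h
  · rw [uIoc_of_le h]
    exact hIoc h (hG.measure_Iic_eq hν s)
  · rw [uIoc_of_ge h]
    exact hIoc h (hG.measure_Iic_eq hν s).symm

theorem measure_setOf_apply_ne_eq_zero [IsFiniteMeasure ν] (hG : StrictMono G)
    (hGc : Continuous G) (hν : MeasurePreserving G ν ν) : ν {x | G x ≠ x} = 0 := by
  refine measure_null_of_locally_null _ fun y hy => ?_
  obtain ⟨z, hz⟩ := hGc.exists_mem_Ioo_min_max_of_apply_ne hy
  exact ⟨_, mem_nhdsWithin_of_mem_nhds (Ioo_mem_nhds hz.1 hz.2),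
    measure_mono_null Ioo_subset_Ioc_self (hG.measure_uIoc_eq_zero hν z)⟩

end StrictMono

theorem MeasureTheory.MeasurePreserving.map_of_semiconj {α β : Type*} [MeasurableSpace α]
    [MeasurableSpace β] {μ : Measure α} {e : α → β} {f : α → α} {g : β → β}
    (hf : MeasurePreserving f μ μ) (he : Measurable e) (hg : Measurable g) (h : Semiconj e f g) :
    MeasurePreserving g (μ.map e) (μ.map e) :=
  ⟨hg, by rw [Measure.map_map hg he, ← h.comp_eq, ← Measure.map_map he hf.measurable, hf.map_eq]⟩

namespace AddCircle

instance {p : ℝ} [Fact (0 < p)] : NullSingletonClass (volume : Measure (AddCircle p)) :=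
  ⟨fun x => by simpa using volume_closedBall (T := p) (x := x) 0⟩

theorem continuous_of_coe_comp {p : ℝ} {f : AddCircle p → AddCircle p} {F : ℝ → ℝ}
    (hF : Continuous F) (hf : ∀ x : ℝ, f x = F x) : Continuous f := by
  rw [(QuotientAddGroup.isQuotientMap_mk _).continuous_iff, show f ∘ (↑) = (↑) ∘ F from funext hf]
  exact continuous_quotient_mk'.comp hF

theorem coe_sub_intCast (x : ℝ) (k : ℤ) : ((x - k : ℝ) : AddCircle (1 : ℝ)) = x := by
  rw [coe_sub, sub_eq_self, coe_eq_zero_iff]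
  exact ⟨k, by simp⟩

theorem exists_sub_intCast_eq_of_coe_eq {x y : ℝ} (h : (y : AddCircle (1 : ℝ)) = x) :
    ∃ k : ℤ, y - k = x := by
  rw [← sub_eq_zero, ← coe_sub, coe_eq_zero_iff] at h
  obtain ⟨k, hk⟩ := h
  exact ⟨k, by simp at hk; linarith⟩

theorem exists_lift_mapsTo_Ioc_of_apply_eq {F : ℝ → ℝ} (hFmono : StrictMono F)
    (hFcont : Continuous F) (hFper : ∀ x : ℝ, F (x + 1) = F x + 1)
    {f : AddCircle (1 : ℝ) → AddCircle (1 : ℝ)} (hf : ∀ x : ℝ, f x = F x) {α : ℝ} (hα : f α = α) :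
    ∃ G : ℝ → ℝ, StrictMono G ∧ Continuous G ∧ (∀ x : ℝ, f x = G x) ∧
      MapsTo G (Ioc α (α + 1)) (Ioc α (α + 1)) := by
  obtain ⟨k, hk⟩ := exists_sub_intCast_eq_of_coe_eq ((hf α).symm.trans hα)
  have hGmono : StrictMono fun x => F x - k := fun a b h => sub_lt_sub_right (hFmono h) _
  have hGα1 : F (α + 1) - k = α + 1 := by rw [hFper]; linarith
  refine ⟨fun x => F x - k, hGmono, hFcont.sub continuous_const,
    fun x => by rw [hf, coe_sub_intCast], ?_⟩
  simpa only [hk, hGα1] using hGmono.mapsTo_Ioc (a := α) (b := α + 1)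

theorem semiconj_equivIoc {p : ℝ} [Fact (0 < p)] {a : ℝ} {f : AddCircle p → AddCircle p}
    {G : ℝ → ℝ} (hf : ∀ x : ℝ, f x = G x) (hG : MapsTo G (Ioc a (a + p)) (Ioc a (a + p))) :
    Semiconj (fun z => (equivIoc p a z : ℝ)) f G := fun z => by
  simp only
  rw [← coe_equivIoc (a := a) (y := z), hf, equivIoc_coe_of_mem (hG (equivIoc p a z).2),
    coe_equivIoc]

end AddCircle

/-- If the circle homeomorphism `f` of `ℝ/ℤ` induced by a degree-one lift `F` has
a nonempty finite fixed point set, then every finite `f`-invariant Borel measure on `ℝ/ℤ` that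
is absolutely continuous with respect to Haar (Lebesgue) measure is the zero measure. -/
theorem stmt_8 (F : ℝ → ℝ) (hFmono : StrictMono F) (hFcont : Continuous F)
    (hFper : ∀ x : ℝ, F (x + 1) = F x + 1)
    (f : AddCircle (1 : ℝ) → AddCircle (1 : ℝ))
    (hf : ∀ x : ℝ, f (x : AddCircle (1 : ℝ)) = ((F x : ℝ) : AddCircle (1 : ℝ)))
    (hfix_ne : {z : AddCircle (1 : ℝ) | f z = z}.Nonempty)
    (hfix_fin : {z : AddCircle (1 : ℝ) | f z = z}.Finite)
    (μ : Measure (AddCircle (1 : ℝ))) [IsFiniteMeasure μ]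
    (hinv : Measure.map f μ = μ)
    (hac : μ ≪ (volume : Measure (AddCircle (1 : ℝ)))) :
    μ = 0 := by
  obtain ⟨z₀, hz₀⟩ := hfix_ne
  obtain ⟨α, rfl⟩ := QuotientAddGroup.mk_surjective z₀
  obtain ⟨G, hGmono, hGcont, hfG, hmaps⟩ :=
    AddCircle.exists_lift_mapsTo_Ioc_of_apply_eq hFmono hFcont hFper hf hz₀
  set e : AddCircle (1 : ℝ) → ℝ := fun z => (AddCircle.equivIoc 1 α z : ℝ)
  have he : Measurable e :=
    measurable_subtype_coe.comp (AddCircle.measurableEquivIoc 1 α).measurable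
  have hν : MeasurePreserving G (μ.map e) (μ.map e) :=
    MeasurePreserving.map_of_semiconj ⟨(AddCircle.continuous_of_coe_comp hFcont hf).measurable, hinv⟩
      he hGcont.measurable (AddCircle.semiconj_equivIoc hfG hmaps)
  have hmoved : μ (e ⁻¹' {x | G x ≠ x}) = 0 := by
    have hmeas : MeasurableSet {x | G x ≠ x} := (isOpen_ne_fun hGcont continuous_id).measurableSet
    rw [← Measure.map_apply he hmeas]
    exact hGmono.measure_setOf_apply_ne_eq_zero hGcont hν
  have hfixed : μ (e ⁻¹' {x | G x = x}) = 0 := by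
    refine hac (measure_mono_null (fun z hz => ?_) (hfix_fin.measure_zero volume))
    change f z = z
    rw [← AddCircle.coe_equivIoc (a := α) (y := z), hfG]
    exact congrArg _ hz
  rw [← Measure.measure_univ_eq_zero]
  exact measure_mono_null (fun z _ => em' (G (e z) = e z)) (measure_union_null hmoved hfixed)
end

section
/- Let F : ℝ → ℝ be a real analytic degree-one lift (analytic, strictly increasing, F(x + 1) = F(x) + 1 for all x), inducing the orientation-preserving circle homeomorphism f of ℝ/ℤ. Suppose: (i) f is conjugate to its inverse by an orientation-preserving circle homeomorphism, concretely there exist a degree-one lift H and an integer m with H(F(x)) = F⁻¹(H(x)) + m for all x ∈ ℝ; and (ii) there exists a nonzero finite Borel measure μ on ℝ/ℤ that is f-invariant (the pushforward of μ under f equals μ) and absolutely continuous with respect to Haar (Lebesgue) measure on ℝ/ℤ. Then f² is the identity map of ℝ/ℤ; equivalently, there exists k ∈ ℤ such that F(F(x)) = x + k for all x ∈ ℝ. -/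
/-!
Conjugating `F` to `F⁻¹` forces its translation number to satisfy `τ = m - τ`, so `F ∘ F` has
translation number `m` and `ψ = F ∘ F - m` has a fixed point. If `ψ ≠ id`, analyticity makes the
fixed points of `ψ` countable, hence `μ`-null because `μ ≪ Haar`. Every other point lies in an
interval between a rational `q` and `ψ q`; the forward `ψ`-orbit of that interval is trapped
between `ψ q` and the nearest fixed point, which lies within distance `1` of `q`, so the interval
is wandering modulo `ℤ`, and Poincaré recurrence for `f ∘ f` makes it `μ`-null. Hence `μ = 0`.
-/

open MeasureTheory

open Set Function

namespace AddCircle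

variable {T : ℝ}

theorem coe_eq_coe_iff_exists_int {x y : ℝ} :
    (x : AddCircle T) = y ↔ ∃ k : ℤ, y = x + k * T := by
  rw [QuotientAddGroup.eq, AddSubgroup.mem_zmultiples_iff]
  exact exists_congr fun k => by rw [zsmul_eq_mul]; constructor <;> intro h <;> linarith

instance [Fact (0 < T)] : NullSingletonClass (volume : Measure (AddCircle T)) :=
  ⟨fun x => by simpa using volume_closedBall T (x := x) 0⟩

theorem continuous_of_semiconj {F : ℝ → ℝ} {f : AddCircle T → AddCircle T} (hF : Continuous F)
    (hf : Semiconj ((↑) : ℝ → AddCircle T) F f) : Continuous f := by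
  rw [(QuotientAddGroup.isQuotientMap_mk _).continuous_iff,
    show f ∘ (↑) = ((↑) : ℝ → AddCircle T) ∘ F from funext fun x => (hf x).symm]
  exact continuous_quotient_mk'.comp hF

end AddCircle

theorem AnalyticOnNhd.countable_setOf_eq {𝕜 E : Type*} [NontriviallyNormedField 𝕜]
    [SecondCountableTopology 𝕜] [PreconnectedSpace 𝕜] [NormedAddCommGroup E] [NormedSpace 𝕜 E]
    {f g : 𝕜 → E} (hf : AnalyticOnNhd 𝕜 f univ) (hg : AnalyticOnNhd 𝕜 g univ) (hne : f ≠ g) :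
    {x | f x = g x}.Countable := by
  have hcodiscrete := (hf.eqOn_or_eventually_ne_of_preconnected hg isPreconnected_univ).resolve_left
    fun h => hne (funext fun x => h (mem_univ x))
  simpa using (HereditarilyLindelofSpace.isLindelof _).countable_of_isDiscrete
    (isDiscrete_of_codiscreteWithin (s := {x | f x = g x}) hcodiscrete)

theorem StrictMono.iterate_succ_mem_Ioo_of_lt {α : Type*} [Preorder α] {ψ : α → α}
    (hψ : StrictMono ψ) {q p : α} (hq : q < ψ q) (hp : IsFixedPt ψ p) {w : α} (hw : w ∈ Ioo q p)
    (n : ℕ) : ψ^[n + 1] w ∈ Ioo (ψ q) p := by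
  have hmaps : MapsTo ψ (Ioo q p) (Ioo q p) := fun x hx => ⟨hq.trans (hψ hx.1), hp ▸ hψ hx.2⟩
  have hn := hmaps.iterate n hw
  rw [iterate_succ_apply']
  exact ⟨hψ hn.1, hp ▸ hψ hn.2⟩

theorem StrictMono.iterate_succ_mem_Ioo_of_gt {α : Type*} [Preorder α] {ψ : α → α}
    (hψ : StrictMono ψ) {q p : α} (hq : ψ q < q) (hp : IsFixedPt ψ p) {w : α} (hw : w ∈ Ioo p q)
    (n : ℕ) : ψ^[n + 1] w ∈ Ioo p (ψ q) := by
  have hmaps : MapsTo ψ (Ioo p q) (Ioo p q) := fun x hx => ⟨hp ▸ hψ hx.1, (hψ hx.2).trans hq⟩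
  have hn := hmaps.iterate n hw
  rw [iterate_succ_apply']
  exact ⟨hp ▸ hψ hn.1, hψ hn.2⟩

theorem Continuous.exists_rat_mem_uIoo_apply {ψ : ℝ → ℝ} (hψ : Continuous ψ) {y : ℝ}
    (hy : ψ y ≠ y) : ∃ q : ℚ, y ∈ uIoo (q : ℝ) (ψ q) := by
  rcases hy.lt_or_gt with h | h
  · obtain ⟨u, hyu, hsub⟩ := mem_nhdsGT_iff_exists_Ioo_subset.1
      (nhdsWithin_le_nhds (hψ.continuousAt.eventually (gt_mem_nhds h)))
    obtain ⟨q, hyq, hqu⟩ := exists_rat_btwn (mem_Ioi.1 hyu)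
    exact ⟨q, mem_uIoo_of_gt (hsub ⟨hyq, hqu⟩) hyq⟩
  · obtain ⟨l, hly, hsub⟩ := mem_nhdsLT_iff_exists_Ioo_subset.1
      (nhdsWithin_le_nhds (hψ.continuousAt.eventually (lt_mem_nhds h)))
    obtain ⟨q, hlq, hqy⟩ := exists_rat_btwn (mem_Iio.1 hly)
    exact ⟨q, mem_uIoo_of_lt hqy (hsub ⟨hlq, hqy⟩)⟩

theorem measure_coe_image_eq_zero_of_wandering {ψ : ℝ → ℝ}
    {g : AddCircle (1 : ℝ) → AddCircle (1 : ℝ)} {μ : Measure (AddCircle (1 : ℝ))}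
    (hg : Semiconj ((↑) : ℝ → AddCircle (1 : ℝ)) ψ g)
    (hcons : Conservative g μ) {s : Set ℝ} (hs : IsOpen s)
    (hwand : ∀ w ∈ s, ∀ u ∈ s, ∀ (n : ℕ) (k : ℤ), ψ^[n + 1] w ≠ u + k) :
    μ (((↑) : ℝ → AddCircle (1 : ℝ)) '' s) = 0 := by
  by_contra hμ
  have hmeas := (QuotientAddGroup.isOpenMap_coe s hs).measurableSet (α := AddCircle (1 : ℝ))
  obtain ⟨-, ⟨w, hw, rfl⟩, n, hn, u, hu, hwu⟩ :=
    hcons.exists_mem_iterate_mem hmeas.nullMeasurableSet hμ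
  rw [← (hg.iterate_right n) w, AddCircle.coe_eq_coe_iff_exists_int] at hwu
  obtain ⟨k, hk⟩ := hwu
  obtain ⟨n, rfl⟩ := Nat.exists_eq_succ_of_ne_zero hn
  exact hwand w hw u hu n k (by simpa using hk)

namespace CircleDeg1Lift

theorem translationNumber_sq_eq_of_semiconj_inv (f : CircleDeg1Liftˣ) {h : CircleDeg1Lift}
    {m : ℤ} (hconj : ∀ x, h (f x) = (↑f⁻¹ : CircleDeg1Lift) (h x) + m) :
    translationNumber ((f : CircleDeg1Lift) ^ 2) = m := by
  -- `τ` is invariant under semiconjugacy, so `τ f = τ (T_m ∘ f⁻¹) = m - τ f`.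
  set T : CircleDeg1Lift := ↑(translate (Multiplicative.ofAdd (m : ℝ)))
  have hsemi : Semiconj h f ⇑(T * ↑f⁻¹) := fun x => by
    rw [mul_apply, hconj, translate_apply, add_comm]
  have hcomm : Commute T ↑f⁻¹ := commute_iff_commute.2 fun x => by
    simp only [T, translate_apply, map_int_add]
  have hτ := translationNumber_eq_of_semiconj hsemi
  rw [translationNumber_mul_of_commute hcomm, translationNumber_translate,
    translationNumber_units_inv] at hτ
  rw [translationNumber_pow]
  push_cast
  linarith

variable (ψ : CircleDeg1Lift) {g : AddCircle (1 : ℝ) → AddCircle (1 : ℝ)}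
  {μ : Measure (AddCircle (1 : ℝ))}

theorem measure_coe_image_uIoo_eq_zero (hψ : StrictMono ψ) {x₀ : ℝ} (hx₀ : IsFixedPt ψ x₀)
    (hg : Semiconj ((↑) : ℝ → AddCircle (1 : ℝ)) ψ g) (hcons : Conservative g μ) (q : ℝ) :
    μ (((↑) : ℝ → AddCircle (1 : ℝ)) '' uIoo q (ψ q)) = 0 := by
  have hfix (k : ℤ) : IsFixedPt ψ (x₀ + k) := by rw [IsFixedPt, map_add_int, hx₀.eq]
  -- `p` is a fixed point within distance `1` of `q`, on the side towards which `ψ` pushes `q`.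
  rcases lt_trichotomy q (ψ q) with hq | hq | hq
  · set p := x₀ + ⌈q - x₀⌉
    have hqp : q < p := (show q ≤ p by linarith [Int.le_ceil (q - x₀)]).lt_of_ne
      fun h => hq.ne' (h ▸ hfix _)
    have hpq : p < q + 1 := by linarith [Int.ceil_lt_add_one (q - x₀)]
    rw [uIoo_of_lt hq]
    refine measure_coe_image_eq_zero_of_wandering hg hcons isOpen_Ioo fun w hw u hu n k hwu => ?_
    have hn := hψ.iterate_succ_mem_Ioo_of_lt hq (hfix _)
      ⟨hw.1, hw.2.trans ((hψ hqp).trans_eq (hfix _))⟩ n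
    rcases le_or_gt k 0 with hk | hk
    · have : (k : ℝ) ≤ 0 := by exact_mod_cast hk
      linarith [hn.1, hu.2]
    · have : (1 : ℝ) ≤ k := by exact_mod_cast hk
      linarith [hn.2, hu.1]
  · rw [← hq, uIoo_self, image_empty, measure_empty]
  · set p := x₀ + ⌊q - x₀⌋
    have hpq : p < q := (show p ≤ q by linarith [Int.floor_le (q - x₀)]).lt_of_ne
      fun h => hq.ne (h ▸ hfix _)
    have hqp : q - 1 < p := by linarith [Int.lt_floor_add_one (q - x₀)]
    rw [uIoo_of_gt hq]
    refine measure_coe_image_eq_zero_of_wandering hg hcons isOpen_Ioo fun w hw u hu n k hwu => ?_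
    have hn := hψ.iterate_succ_mem_Ioo_of_gt hq (hfix _)
      ⟨((hfix _).eq.symm.trans_lt (hψ hpq)).trans hw.1, hw.2⟩ n
    rcases le_or_gt 0 k with hk | hk
    · have : (0 : ℝ) ≤ k := by exact_mod_cast hk
      linarith [hn.2, hu.1]
    · have : (k : ℝ) ≤ -1 := by exact_mod_cast Int.le_sub_one_of_lt hk
      linarith [hn.1, hu.2]

theorem measure_compl_coe_image_fixedPoints_eq_zero (hψ : StrictMono ψ) (hcont : Continuous ψ)
    {x₀ : ℝ} (hx₀ : IsFixedPt ψ x₀) (hg : Semiconj ((↑) : ℝ → AddCircle (1 : ℝ)) ψ g)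
    (hcons : Conservative g μ) :
    μ ((((↑) : ℝ → AddCircle (1 : ℝ)) '' fixedPoints ψ)ᶜ) = 0 := by
  refine measure_mono_null (fun z hz => ?_)
    (measure_iUnion_null fun q : ℚ => ψ.measure_coe_image_uIoo_eq_zero hψ hx₀ hg hcons q)
  induction z using QuotientAddGroup.induction_on with
  | H y =>
    obtain ⟨q, hq⟩ := hcont.exists_rat_mem_uIoo_apply fun h => hz ⟨y, h, rfl⟩
    exact mem_iUnion.2 ⟨q, y, hq, rfl⟩

end CircleDeg1Lift

theorem exists_apply_apply_eq_add_int_of_conj_inv {F Finv H : ℝ → ℝ} {m : ℤ} (hF : StrictMono F)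
    (hFc : Continuous F) (hFper : ∀ x, F (x + 1) = F x + 1) (h₁ : LeftInverse Finv F)
    (h₂ : RightInverse Finv F) (hH : Monotone H) (hHper : ∀ x, H (x + 1) = H x + 1)
    (hconj : ∀ x, H (F x) = Finv (H x) + m) :
    ∃ x, F (F x) = x + m := by
  have hFinv_mono : Monotone Finv := fun x y hxy => hF.le_iff_le.1 (by rwa [h₂ x, h₂ y])
  have hFinv_per : ∀ x, Finv (x + 1) = Finv x + 1 := fun x =>
    hF.injective (by rw [h₂, hFper, h₂])
  let f : CircleDeg1Liftˣ :=
    { val := ⟨⟨F, hF.monotone⟩, hFper⟩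
      inv := ⟨⟨Finv, hFinv_mono⟩, hFinv_per⟩
      val_inv := CircleDeg1Lift.ext h₂
      inv_val := CircleDeg1Lift.ext h₁ }
  have hτ := CircleDeg1Lift.translationNumber_sq_eq_of_semiconj_inv f (h := ⟨⟨H, hH⟩, hHper⟩) hconj
  exact ((f : CircleDeg1Lift) ^ 2).translationNumber_eq_int_iff
    (by rw [CircleDeg1Lift.coe_pow]; exact hFc.iterate 2) |>.1 hτ

theorem stmt_9_general (F : ℝ → ℝ) (hFan : ∀ x : ℝ, AnalyticAt ℝ F x)
    (hFmono : StrictMono F) (hFcont : Continuous F)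
    (hFper : ∀ x : ℝ, F (x + 1) = F x + 1)
    (f : AddCircle (1 : ℝ) → AddCircle (1 : ℝ))
    (hf : ∀ x : ℝ, f (x : AddCircle (1 : ℝ)) = ((F x : ℝ) : AddCircle (1 : ℝ)))
    (Finv : ℝ → ℝ) (hFinv₁ : Function.LeftInverse Finv F)
    (hFinv₂ : Function.RightInverse Finv F)
    (H : ℝ → ℝ) (hHmono : StrictMono H)
    (hHper : ∀ x : ℝ, H (x + 1) = H x + 1)
    (m : ℤ) (hconj : ∀ x : ℝ, H (F x) = Finv (H x) + m)
    (μ : Measure (AddCircle (1 : ℝ))) [IsFiniteMeasure μ] (hμ : μ ≠ 0)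
    (hinv : Measure.map f μ = μ)
    (hac : μ ≪ (volume : Measure (AddCircle (1 : ℝ)))) :
    (∀ z : AddCircle (1 : ℝ), f (f z) = z) ∧ ∃ k : ℤ, ∀ x : ℝ, F (F x) = x + k := by
  have coe_sub_int (x : ℝ) : ((x - m : ℝ) : AddCircle (1 : ℝ)) = x :=
    AddCircle.coe_eq_coe_iff_exists_int.2 ⟨m, by ring⟩
  obtain ⟨x₀, hx₀⟩ := exists_apply_apply_eq_add_int_of_conj_inv hFmono hFcont hFper hFinv₁
    hFinv₂ hHmono.monotone hHper hconj
  by_cases hsq : ∀ x, F (F x) = x + m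
  · refine ⟨fun z => ?_, m, hsq⟩
    induction z using QuotientAddGroup.induction_on with
    | H x => rw [hf, hf, hsq, ← coe_sub_int, add_sub_cancel_right]
  let ψ : CircleDeg1Lift := ⟨⟨fun x => F (F x) - m, fun x y h => sub_le_sub_right
    ((hFmono.comp hFmono).monotone h) _⟩, fun x => by simp only [hFper]; ring⟩
  have hψ : StrictMono ψ := fun x y h => sub_lt_sub_right (hFmono (hFmono h)) _
  have hfix : IsFixedPt ψ x₀ := by show F (F x₀) - m = x₀; linarith
  have hcount : (fixedPoints ψ).Countable :=
    AnalyticOnNhd.countable_setOf_eq (fun x _ => ((hFan _).comp (hFan x)).sub analyticAt_const)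
      (fun x _ => analyticAt_id) fun h => hsq fun x => by
        linarith [show F (F x) - m = x from congrFun h x]
  have hsemi : Semiconj ((↑) : ℝ → AddCircle (1 : ℝ)) ψ (f ∘ f) := fun x => by
    show ((F (F x) - m : ℝ) : AddCircle (1 : ℝ)) = f (f x)
    rw [hf, hf, coe_sub_int]
  have hf_mp : MeasurePreserving f μ μ :=
    ⟨(AddCircle.continuous_of_semiconj hFcont fun x => (hf x).symm).measurable, hinv⟩
  have hnull := ψ.measure_compl_coe_image_fixedPoints_eq_zero hψ
    ((hFcont.comp hFcont).sub continuous_const) hfix hsemi (hf_mp.comp hf_mp).conservative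
  refine absurd (Measure.measure_univ_eq_zero.1 ?_) hμ
  rw [← union_compl_self (((↑) : ℝ → AddCircle (1 : ℝ)) '' fixedPoints ψ)]
  exact measure_union_null (hac ((hcount.image _).measure_zero _)) hnull

/-- A real analytic degree-one lift `F` inducing a circle homeomorphism `f` that
is (i) conjugate to its inverse by an orientation-preserving circle homeomorphism and
(ii) preserves a nonzero finite Borel measure absolutely continuous with respect to Haar
measure, satisfies `f² = id`; equivalently `F (F x) = x + k` for some fixed integer `k`. -/
theorem stmt_9 (F : ℝ → ℝ) (hFan : ∀ x : ℝ, AnalyticAt ℝ F x)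
    (hFmono : StrictMono F) (hFcont : Continuous F)
    (hFper : ∀ x : ℝ, F (x + 1) = F x + 1)
    (f : AddCircle (1 : ℝ) → AddCircle (1 : ℝ))
    (hf : ∀ x : ℝ, f (x : AddCircle (1 : ℝ)) = ((F x : ℝ) : AddCircle (1 : ℝ)))
    (Finv : ℝ → ℝ) (hFinv₁ : Function.LeftInverse Finv F)
    (hFinv₂ : Function.RightInverse Finv F)
    (H : ℝ → ℝ) (hHmono : StrictMono H) (hHcont : Continuous H)
    (hHper : ∀ x : ℝ, H (x + 1) = H x + 1)
    (m : ℤ) (hconj : ∀ x : ℝ, H (F x) = Finv (H x) + m)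
    (μ : Measure (AddCircle (1 : ℝ))) [IsFiniteMeasure μ] (hμ : μ ≠ 0)
    (hinv : Measure.map f μ = μ)
    (hac : μ ≪ (volume : Measure (AddCircle (1 : ℝ)))) :
    (∀ z : AddCircle (1 : ℝ), f (f z) = z) ∧ ∃ k : ℤ, ∀ x : ℝ, F (F x) = x + k :=
  stmt_9_general F hFan hFmono hFcont hFper f hf Finv hFinv₁ hFinv₂ H hHmono hHper m hconj μ hμ hinv
    hac
end
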